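/- Let (F, G) be a Frobenius pair between abelian categories with enough projectives. If f : X ⟶ M is a Gorenstein projective precover of M in C, then F(f) : F(X) ⟶ F(M) is a Gorenstein projective precover of F(M) in D. -/

import Mathlib

open CategoryTheory Limits

/-- An object `M` of an abelian category is *Gorenstein projective* if it is a syzygy
(the kernel `ker(P⁰ → P¹)`) of an acyclic complex `P` of projective objects such that
`Hom(P, Q)` is acyclic for every projective `Q`. -/
def IsGorensteinProjective {A : Type*} [Category A] [Abelian A] (M : A) : Prop :=
  ∃ P : CochainComplex A ℤ,
    (∀ n : ℤ, Projective (P.X n)) ∧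
    (∀ n : ℤ, P.ExactAt n) ∧
    Nonempty (M ≅ P.cycles 0) ∧
    ∀ (Q : A), Projective Q → ∀ (n : ℤ) (f : P.X n ⟶ Q), P.d (n - 1) n ≫ f = 0 →
      ∃ g : P.X (n + 1) ⟶ Q, P.d n (n + 1) ≫ g = f

/-- `φ : X ⟶ M` is an `𝒳`-precover of `M` if `X ∈ 𝒳` and every morphism from an object
of `𝒳` to `M` factors through `φ`. -/
def IsPrecover {A : Type*} [Category A] (𝒳 : A → Prop) {X M : A} (φ : X ⟶ M) : Prop :=
  𝒳 X ∧ ∀ (X' : A), 𝒳 X' → ∀ f : X' ⟶ M, ∃ g : X' ⟶ X, g ≫ φ = f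
/-! A functor `F` with adjoints on both sides is exact, and `F` and `G` preserve projectives.
So `F` sends a complete projective resolution `P` of `M` to an acyclic complex of projectives
with `F M` as syzygy, and `Hom(F P, Q)` is acyclic because it is `Hom(P, G Q)` under the
adjunction `F ⊣ G`. By symmetry `G` preserves Gorenstein projectives as well, and a morphism
`F X' ⟶ F M` to be factored is transposed along `G ⊣ F` to a morphism `G X' ⟶ M`. -/

namespace CategoryTheory.Adjunction

variable {C D : Type*} [Category C] [Category D] {F : C ⥤ D} {G : D ⥤ C}

lemma exists_map_comp_eq_of_exists_comp_eq [HasZeroMorphisms C] [HasZeroMorphisms D]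
    (adj : F ⊣ G) {A B E : C} {d₁ : A ⟶ B} {d₂ : B ⟶ E} {Q : D}
    (h : ∀ f : B ⟶ G.obj Q, d₁ ≫ f = 0 → ∃ g : E ⟶ G.obj Q, d₂ ≫ g = f)
    (φ : F.obj B ⟶ Q) (hφ : F.map d₁ ≫ φ = 0) : ∃ g : F.obj E ⟶ Q, F.map d₂ ≫ g = φ := by
  have := adj.isRightAdjoint
  obtain ⟨g, hg⟩ := h (adj.homEquiv _ _ φ) <| by
    rw [← adj.homEquiv_naturality_left, hφ, adj.homEquiv_unit, Functor.map_zero, comp_zero]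
  exact ⟨(adj.homEquiv _ _).symm g, by
    rw [← adj.homEquiv_naturality_left_symm, hg, Equiv.symm_apply_apply]⟩

end CategoryTheory.Adjunction

open CategoryTheory

theorem IsGorensteinProjective.map {C D : Type*} [Category C] [Category D] [Abelian C] [Abelian D]
    {F : C ⥤ D} {G : D ⥤ C} (adj₁ : F ⊣ G) (adj₂ : G ⊣ F) {M : C}
    (hM : IsGorensteinProjective M) : IsGorensteinProjective (F.obj M) := by
  obtain ⟨P, hproj, hexact, ⟨e⟩, hlift⟩ := hM
  have := adj₁.isLeftAdjoint
  have := adj₂.isRightAdjoint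
  have := adj₂.isLeftAdjoint
  refine ⟨(F.mapHomologicalComplex _).obj P, fun n => adj₁.map_projective _ (hproj n),
    fun n => (hexact n).map F, ⟨F.mapIso e ≪≫ ((P.sc 0).mapCyclesIso F).symm⟩, ?_⟩
  intro Q hQ n
  exact adj₁.exists_map_comp_eq_of_exists_comp_eq (hlift _ (adj₂.map_projective Q hQ) n)

theorem IsPrecover.map {C D : Type*} [Category C] [Category D] {𝒳 : C → Prop} {𝒴 : D → Prop}
    {F : C ⥤ D} {G : D ⥤ C} (adj : G ⊣ F) (hF : ∀ X, 𝒳 X → 𝒴 (F.obj X))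
    (hG : ∀ Y, 𝒴 Y → 𝒳 (G.obj Y)) {X M : C} {f : X ⟶ M} (hf : IsPrecover 𝒳 f) :
    IsPrecover 𝒴 (F.map f) := by
  refine ⟨hF X hf.1, fun Y hY g => ?_⟩
  obtain ⟨h, hh⟩ := hf.2 (G.obj Y) (hG Y hY) ((adj.homEquiv Y M).symm g)
  exact ⟨adj.homEquiv Y X h, by rw [← adj.homEquiv_naturality_right, hh, Equiv.apply_symm_apply]⟩

theorem frobenius_pair_map_precover_general {C D : Type*} [Category C] [Category D]
    [Abelian C] [Abelian D]
    (F : C ⥤ D) (G : D ⥤ C)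
    (adj₁ : F ⊣ G) (adj₂ : G ⊣ F) {X M : C} (f : X ⟶ M)
    (hf : IsPrecover (IsGorensteinProjective (A := C)) f) :
    IsPrecover (IsGorensteinProjective (A := D)) (F.map f) :=
  hf.map adj₂ (fun _ hX => hX.map adj₁ adj₂) (fun _ hY => hY.map adj₂ adj₁)

/-- If `(F, G)` is a Frobenius pair between abelian categories with enough projectives
and `f : X ⟶ M` is a Gorenstein projective precover in `C`, then
`F f : F X ⟶ F M` is a Gorenstein projective precover in `D`. -/
theorem frobenius_pair_map_precover {C D : Type*} [Category C] [Category D]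
    [Abelian C] [Abelian D] [EnoughProjectives C] [EnoughProjectives D]
    (F : C ⥤ D) (G : D ⥤ C) [F.Additive] [G.Additive]
    (adj₁ : F ⊣ G) (adj₂ : G ⊣ F) {X M : C} (f : X ⟶ M)
    (hf : IsPrecover (IsGorensteinProjective (A := C)) f) :
    IsPrecover (IsGorensteinProjective (A := D)) (F.map f) :=
  frobenius_pair_map_precover_general F G adj₁ adj₂ f hf
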